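/- arXiv:2312.12279 — 9 statements merged into one kernel-verified Lean document; each statement's English description precedes it below -/
import Mathlib

section
/- Let G be an abelian group and let ≼ be a total preorder on G (reflexive, transitive, and any two elements are comparable). Write x ∼ y when x ≼ y and y ≼ x, and x ≺ y when x ≼ y and not y ≼ x. Assume that for all x, y ∈ G, x ≺ y implies x + y ∼ y. Then: (1) 0 ≼ x for every x ∈ G; (2) the set N = {x ∈ G : x ∼ 0} is a subgroup of G; (3) for all x, y ∈ G, x − y ≼ x or x − y ≼ y (ultrametric inequality: the class of x − y is at most the maximum of the classes of x and y). -/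
/-!
Write `x ≼ y` for `r x y`. The axiom `x ≺ y → y ≼ x + y`, applied with `y = 0`, shows that
nothing lies strictly below `0`; applied to `x ≺ -x` it would give `-x ≼ 0 ≼ x`, so `x ∼ -x`.
Then if `a + b ≻ b ∼ -b`, the axiom for `-b ≺ a + b` gives `a + b ≼ -b + (a + b) = a`.
Replacing `b` by `-b` yields the ultrametric inequality, which makes the class of `0` closed under
subtraction.
-/

namespace ValuationPreorder

variable {G : Type*} [AddCommGroup G] {r : G → G → Prop}

theorem zero_le (htotal : ∀ x y, r x y ∨ r y x)
    (hax : ∀ x y, r x y → ¬ r y x → r y (x + y)) (x : G) : r 0 x := by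
  by_contra hx
  have hx0 : r x 0 := (htotal 0 x).resolve_left hx
  exact hx (by simpa using hax x 0 hx0 hx)

theorem neg_le (htrans : ∀ x y z, r x y → r y z → r x z) (htotal : ∀ x y, r x y ∨ r y x)
    (hax : ∀ x y, r x y → ¬ r y x → r y (x + y)) (x : G) : r (-x) x := by
  by_contra hx
  have hneg_zero : r (-x) 0 := by
    simpa using hax x (-x) ((htotal (-x) x).resolve_left hx) hx
  exact hx (htrans _ _ _ hneg_zero (zero_le htotal hax x))

theorem add_le_or_add_le (htrans : ∀ x y z, r x y → r y z → r x z)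
    (htotal : ∀ x y, r x y ∨ r y x) (hax : ∀ x y, r x y → ¬ r y x → r y (x + y)) (a b : G) :
    r (a + b) a ∨ r (a + b) b := by
  refine or_iff_not_imp_right.2 fun hab => ?_
  have hb : r b (a + b) := (htotal _ _).resolve_left hab
  have hlt : r (-b) (a + b) ∧ ¬ r (a + b) (-b) :=
    ⟨htrans _ _ _ (neg_le htrans htotal hax b) hb,
      fun h => hab (htrans _ _ _ h (neg_le htrans htotal hax b))⟩
  simpa using hax _ _ hlt.1 hlt.2

theorem sub_le_or_sub_le (htrans : ∀ x y z, r x y → r y z → r x z)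
    (htotal : ∀ x y, r x y ∨ r y x) (hax : ∀ x y, r x y → ¬ r y x → r y (x + y)) (a b : G) :
    r (a - b) a ∨ r (a - b) b := by
  rw [sub_eq_add_neg]
  exact (add_le_or_add_le htrans htotal hax a (-b)).imp_right fun h =>
    htrans _ _ _ h (neg_le htrans htotal hax b)

theorem exists_addSubgroup_coe_eq_setOf_equiv_zero (htrans : ∀ x y z, r x y → r y z → r x z)
    (hzero : ∀ x, r 0 x) (hsub : ∀ a b, r (a - b) a ∨ r (a - b) b) :
    ∃ N : AddSubgroup G, (N : Set G) = {x : G | r x 0 ∧ r 0 x} := by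
  refine ⟨AddSubgroup.ofSub {x | r x 0 ∧ r 0 x} ⟨0, hzero 0, hzero 0⟩ ?_, rfl⟩
  rintro a ⟨ha, -⟩ b ⟨hb, -⟩
  rw [← sub_eq_add_neg]
  exact ⟨(hsub a b).elim (htrans _ _ _ · ha) (htrans _ _ _ · hb), hzero _⟩

end ValuationPreorder

open ValuationPreorder in
theorem valuation_of_preorder_general (G : Type*) [AddCommGroup G] (r : G → G → Prop)
    (htrans : ∀ x y z, r x y → r y z → r x z)
    (htotal : ∀ x y, r x y ∨ r y x)
    (hax : ∀ x y, r x y → ¬ r y x → (r (x + y) y ∧ r y (x + y))) :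
    (∀ x, r 0 x) ∧
    (∃ N : AddSubgroup G, (N : Set G) = {x : G | r x 0 ∧ r 0 x}) ∧
    (∀ x y, r (x - y) x ∨ r (x - y) y) := by
  have hax' : ∀ x y, r x y → ¬ r y x → r y (x + y) := fun x y h h' => (hax x y h h').2
  have hsub := sub_le_or_sub_le htrans htotal hax'
  have hzero := zero_le htotal hax'
  exact ⟨hzero, exists_addSubgroup_coe_eq_setOf_equiv_zero htrans hzero hsub, hsub⟩

/-- Let `G` be an abelian group and `r` a total preorder on `G` such that `x ≺ y`
implies `x + y ∼ y` (where `∼` is the associated equivalence and `≺` the strict part).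
Then: (1) the class of `0` is least; (2) `{x : x ∼ 0}` is a subgroup of `G`;
(3) ultrametric inequality: `x − y ≼ x` or `x − y ≼ y`. -/
theorem valuation_of_preorder (G : Type*) [AddCommGroup G] (r : G → G → Prop)
    (hrefl : ∀ x, r x x)
    (htrans : ∀ x y z, r x y → r y z → r x z)
    (htotal : ∀ x y, r x y ∨ r y x)
    (hax : ∀ x y, r x y → ¬ r y x → (r (x + y) y ∧ r y (x + y))) :
    (∀ x, r 0 x) ∧
    (∃ N : AddSubgroup G, (N : Set G) = {x : G | r x 0 ∧ r 0 x}) ∧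
    (∀ x y, r (x - y) x ∨ r (x - y) y) :=
  valuation_of_preorder_general G r htrans htotal hax
end

section
/- Let d₁, d₂ ∈ M. Then G(d₁ + d₂/A) ⊆ G(d₁/A) ∪ G(d₂/A); equivalently, since the sets G(·/A) are totally ordered by inclusion, G(d₁ + d₂/A) is contained in the larger of G(d₁/A) and G(d₂/A). (Hence d ↦ G(d/A) is an A-valuation on M.) -/
/-!
`Stab(d/A)` is a convex subgroup of `A` that does not change when `d` is translated by an element
of `A`, and for `d ∉ A` the set `G(d/A)` consists of the `x` with `|x| < |a|` for every `a ∈ A`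
outside `Stab(d/A)`. A nonnegative `a ∈ A` leaves `Stab(d/A)` exactly when some `b ∈ A` in
`[d, d + a]`, not a common endpoint, separates the cuts of `d` and `d + a`. Adding such separating
points for `d₁` and `d₂` separates `d₁ + d₂` from `d₁ + d₂ + 2a`, so an `a` outside both
stabilizers has `2a`, hence `a`, outside `Stab(d₁ + d₂/A)`. If `x` lies outside `G(d₁/A)` and
`G(d₂/A)`, witnessed by `a₁, a₂` with `|aᵢ| ≤ |x|`, then by convexity `max |a₁| |a₂|` lies outside
both stabilizers, hence outside `Stab(d₁ + d₂/A)`, and so `x ∉ G(d₁ + d₂/A)`. When `d₁` or `d₂`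
lies in `A`, translation invariance gives the claim directly.
-/

/-- `c` and `d` realize the same cut over the subgroup `A`. -/
def SameCut {M : Type*} [AddCommGroup M] [LinearOrder M] [IsOrderedAddMonoid M] (A : AddSubgroup M) (c d : M) : Prop :=
  ∀ a ∈ A, ((a ≤ c ↔ a ≤ d) ∧ (c ≤ a ↔ d ≤ a))

/-- `Stab(d/A)`: elements `a ∈ A` such that `d + a` and `d` realize the same cut over `A`. -/
def Stab {M : Type*} [AddCommGroup M] [LinearOrder M] [IsOrderedAddMonoid M] (A : AddSubgroup M) (d : M) : Set M :=
  {a | a ∈ A ∧ SameCut A (d + a) d}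

open Classical in
/-- `G(d/A)`. -/
def Gset {M : Type*} [AddCommGroup M] [LinearOrder M] [IsOrderedAddMonoid M] (A : AddSubgroup M) (d : M) : Set M :=
  if d ∈ A then ({0} : Set M)
  else {x | ∀ a ∈ A, a ∉ Stab A d → (-|a| < x ∧ x < |a|)}

/-- `H(d/A)`. -/
def Hset {M : Type*} [AddCommGroup M] [LinearOrder M] [IsOrderedAddMonoid M] (A : AddSubgroup M) (d : M) : Set M :=
  {x | ∃ a ∈ Stab A d, |x| ≤ |a|}

/-- `Δ(x) ≤ Δ(y)`: `|x| ≤ n • |y|` for some natural number `n`. -/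
def DeltaLe {M : Type*} [AddCommGroup M] [LinearOrder M] [IsOrderedAddMonoid M] (x y : M) : Prop :=
  ∃ n : ℕ, |x| ≤ n • |y|

/-- `Δ(x) = Δ(y)`. -/
def DeltaEq {M : Type*} [AddCommGroup M] [LinearOrder M] [IsOrderedAddMonoid M] (x y : M) : Prop :=
  DeltaLe x y ∧ DeltaLe y x

/-- `Δ(x) < Δ(y)`. -/
def DeltaLt {M : Type*} [AddCommGroup M] [LinearOrder M] [IsOrderedAddMonoid M] (x y : M) : Prop :=
  DeltaLe x y ∧ ¬ DeltaLe y x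

/-- `Δ(x) ∈ Δ(A)`. -/
def DeltaMem {M : Type*} [AddCommGroup M] [LinearOrder M] [IsOrderedAddMonoid M] (x : M) (A : AddSubgroup M) : Prop :=
  ∃ a ∈ A, DeltaEq x a

/-- `a` is a ramifier of `d` over `A`: `a ∈ A` and `Δ(d − a) ∉ Δ(A)`. -/
def IsRamifier {M : Type*} [AddCommGroup M] [LinearOrder M] [IsOrderedAddMonoid M] (A : AddSubgroup M) (d a : M) : Prop :=
  a ∈ A ∧ ¬ DeltaMem (d - a) A

/-- `d` is ramified over `A` if it admits a ramifier. -/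
def Ramified {M : Type*} [AddCommGroup M] [LinearOrder M] [IsOrderedAddMonoid M] (A : AddSubgroup M) (d : M) : Prop :=
  ∃ a, IsRamifier A d a

/-- `d` is cut-independent from `B` over `A`: every closed interval with bounds in `B`
containing `d` contains a point of `A`. -/
def CutIndep {M : Type*} [AddCommGroup M] [LinearOrder M] [IsOrderedAddMonoid M] (A B : AddSubgroup M) (d : M) : Prop :=
  ∀ b₁ ∈ B, ∀ b₂ ∈ B, b₁ ≤ d → d ≤ b₂ → ∃ a ∈ A, b₁ ≤ a ∧ a ≤ b₂

section

variable {M : Type*} [AddCommGroup M] [LinearOrder M] [IsOrderedAddMonoid M] {A : AddSubgroup M}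
  {a b c d : M}

namespace SameCut

theorem refl (d : M) : SameCut A d d := fun _ _ => ⟨Iff.rfl, Iff.rfl⟩

theorem symm (h : SameCut A c d) : SameCut A d c :=
  fun b hb => ⟨(h b hb).1.symm, (h b hb).2.symm⟩

theorem trans {e : M} (h₁ : SameCut A c d) (h₂ : SameCut A d e) : SameCut A c e :=
  fun b hb => ⟨(h₁ b hb).1.trans (h₂ b hb).1, (h₁ b hb).2.trans (h₂ b hb).2⟩

theorem add_right (ha : a ∈ A) (h : SameCut A c d) : SameCut A (c + a) (d + a) := fun b hb =>
  have h' := h (b - a) (A.sub_mem hb ha)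
  ⟨by simpa only [sub_le_iff_le_add] using h'.1, by simpa only [le_sub_iff_add_le] using h'.2⟩

end SameCut

theorem sameCut_add_right_iff (ha : a ∈ A) : SameCut A (c + a) (d + a) ↔ SameCut A c d :=
  ⟨fun h => by simpa using h.add_right (A.neg_mem ha), SameCut.add_right ha⟩

theorem Stab_add_of_mem (ha : a ∈ A) : Stab A (d + a) = Stab A d := by
  ext b
  simp only [Stab, Set.mem_ofPred_eq, add_right_comm d a b, sameCut_add_right_iff ha]

theorem zero_mem_Stab (d : M) : (0 : M) ∈ Stab A d :=
  ⟨A.zero_mem, by simpa using SameCut.refl d⟩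

theorem neg_mem_Stab (h : a ∈ Stab A d) : -a ∈ Stab A d :=
  ⟨A.neg_mem h.1, by simpa using (h.2.add_right (A.neg_mem h.1)).symm⟩

theorem add_mem_Stab (ha : a ∈ Stab A d) (hb : b ∈ Stab A d) : a + b ∈ Stab A d := by
  rw [← Stab_add_of_mem ha.1] at hb
  exact ⟨A.add_mem ha.1 hb.1, by simpa only [add_assoc] using hb.2.trans ha.2⟩

theorem abs_mem_Stab_iff : |a| ∈ Stab A d ↔ a ∈ Stab A d := by
  rcases abs_choice a with h | h <;> rw [h]
  exact ⟨fun h => by simpa using neg_mem_Stab h, neg_mem_Stab⟩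

theorem notMem_Stab_of_mem_Icc (hb : b ∈ A) (hdb : d ≤ b) (hbd : b ≤ d + a)
    (hne : d < b ∨ b < d + a) : a ∉ Stab A d := by
  rintro ⟨-, h⟩
  rcases hne with hlt | hlt
  · exact hlt.not_ge ((h b hb).1.mp hbd)
  · exact hlt.not_ge ((h b hb).2.mpr hdb)

theorem exists_mem_Icc_of_notMem_Stab (ha : 0 ≤ a) (haA : a ∈ A) (h : a ∉ Stab A d) :
    ∃ b ∈ A, d ≤ b ∧ b ≤ d + a ∧ (d < b ∨ b < d + a) := by
  have hd : d ≤ d + a := le_add_of_nonneg_right ha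
  by_contra! hsep
  refine h ⟨haA, fun b hb => ⟨⟨fun hbd => ?_, fun hbd => hbd.trans hd⟩,
    ⟨fun hdb => hd.trans hdb, fun hdb => ?_⟩⟩⟩
  · by_contra hdb
    exact (hsep b hb (not_le.mp hdb).le hbd).1.not_gt (not_le.mp hdb)
  · by_contra hbd
    exact (hsep b hb hdb (not_le.mp hbd).le).2.not_gt (not_le.mp hbd)

theorem notMem_Stab_of_le (hbA : b ∈ A) (hb : b ∉ Stab A d) (hb₀ : 0 ≤ b) (hba : b ≤ a) :
    a ∉ Stab A d := by
  obtain ⟨c, hcA, hdc, hcd, hne⟩ := exists_mem_Icc_of_notMem_Stab hb₀ hbA hb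
  have hba' : d + b ≤ d + a := (add_le_add_iff_left d).mpr hba
  exact notMem_Stab_of_mem_Icc hcA hdc (hcd.trans hba')
    (hne.imp_right fun h => h.trans_le hba')

theorem notMem_Stab_of_abs_le (hbA : b ∈ A) (hb : b ∉ Stab A d) (hba : |b| ≤ |a|) :
    a ∉ Stab A d := by
  rw [← abs_mem_Stab_iff] at hb ⊢
  exact notMem_Stab_of_le (abs_mem_iff.mpr hbA) hb (abs_nonneg b) hba

theorem notMem_Stab_add (ha : 0 ≤ a) (haA : a ∈ A) {d₁ d₂ : M} (h₁ : a ∉ Stab A d₁)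
    (h₂ : a ∉ Stab A d₂) : a ∉ Stab A (d₁ + d₂) := by
  obtain ⟨b₁, hb₁, hdb₁, hbd₁, hne₁⟩ := exists_mem_Icc_of_notMem_Stab ha haA h₁
  obtain ⟨b₂, hb₂, hdb₂, hbd₂, hne₂⟩ := exists_mem_Icc_of_notMem_Stab ha haA h₂
  have hsum : d₁ + a + (d₂ + a) = d₁ + d₂ + (a + a) := by abel
  have hdouble : a + a ∉ Stab A (d₁ + d₂) := by
    refine notMem_Stab_of_mem_Icc (A.add_mem hb₁ hb₂) (add_le_add hdb₁ hdb₂)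
      (hsum ▸ add_le_add hbd₁ hbd₂) ?_
    rcases hne₁ with h | h
    · exact Or.inl (add_lt_add_of_lt_of_le h hdb₂)
    rcases hne₂ with h' | h'
    · exact Or.inl (add_lt_add_of_le_of_lt hdb₁ h')
    · exact Or.inr (hsum ▸ add_lt_add_of_le_of_lt hbd₁ h')
  exact fun h => hdouble (add_mem_Stab h h)

theorem Gset_of_mem (hd : d ∈ A) : Gset A d = {0} := if_pos hd

theorem mem_Gset_of_notMem {x : M} (hd : d ∉ A) :
    x ∈ Gset A d ↔ ∀ a ∈ A, a ∉ Stab A d → |x| < |a| := by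
  simp only [Gset, if_neg hd, Set.mem_ofPred_eq, abs_lt]

theorem zero_mem_Gset (d : M) : (0 : M) ∈ Gset A d := by
  by_cases hd : d ∈ A
  · simp [Gset_of_mem hd]
  · rw [mem_Gset_of_notMem hd]
    intro a _ ha
    simpa using fun h : a = 0 => ha (h ▸ zero_mem_Stab d)

theorem Gset_add_of_mem (ha : a ∈ A) : Gset A (d + a) = Gset A d := by
  rw [Gset, Gset, Stab_add_of_mem ha]
  classical
  exact if_congr (add_mem_cancel_right ha) rfl rfl

theorem Gset_add_subset_union_of_notMem {d₁ d₂ : M} (h₁ : d₁ ∉ A) (h₂ : d₂ ∉ A)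
    (h : d₁ + d₂ ∉ A) : Gset A (d₁ + d₂) ⊆ Gset A d₁ ∪ Gset A d₂ := by
  intro x hx
  by_contra! hx'
  simp only [Set.mem_union, not_or, mem_Gset_of_notMem h₁, mem_Gset_of_notMem h₂,
    not_forall, not_lt, exists_prop] at hx'
  obtain ⟨⟨a₁, ha₁, hs₁, hx₁⟩, ⟨a₂, ha₂, hs₂, hx₂⟩⟩ := hx'
  set a := max |a₁| |a₂|
  have haA : a ∈ A := by rcases max_choice |a₁| |a₂| with e | e <;> simp [a, e, ha₁, ha₂]
  have ha₀ : 0 ≤ a := (abs_nonneg a₁).trans (le_max_left _ _)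
  have habs : |a| = a := abs_of_nonneg ha₀
  have hs : a ∉ Stab A (d₁ + d₂) :=
    notMem_Stab_add ha₀ haA
      (notMem_Stab_of_abs_le ha₁ hs₁ ((le_max_left _ _).trans_eq habs.symm))
      (notMem_Stab_of_abs_le ha₂ hs₂ ((le_max_right _ _).trans_eq habs.symm))
  have hlt := (mem_Gset_of_notMem h).mp hx a haA hs
  rw [habs] at hlt
  exact hlt.not_ge (max_le hx₁ hx₂)

end

theorem Gset_add_subset_union_general (M : Type*) [AddCommGroup M] [LinearOrder M] [IsOrderedAddMonoid M]
    (A : AddSubgroup M)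
    (d₁ d₂ : M) :
    Gset A (d₁ + d₂) ⊆ Gset A d₁ ∪ Gset A d₂ := by
  by_cases h₁ : d₁ ∈ A
  · rw [add_comm, Gset_add_of_mem h₁]
    exact Set.subset_union_right
  by_cases h₂ : d₂ ∈ A
  · rw [Gset_add_of_mem h₂]
    exact Set.subset_union_left
  by_cases h : d₁ + d₂ ∈ A
  · rw [Gset_of_mem h, Set.singleton_subset_iff]
    exact Or.inl (zero_mem_Gset d₁)
  exact Gset_add_subset_union_of_notMem h₁ h₂ h

/-- Ultrametric inequality for `d ↦ G(d/A)`: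
`G(d₁ + d₂/A)` is contained in `G(d₁/A) ∪ G(d₂/A)` (i.e. in the larger of the two,
since these sets are totally ordered by inclusion). -/
theorem Gset_add_subset_union (M : Type*) [AddCommGroup M] [LinearOrder M] [IsOrderedAddMonoid M]
    (hMdiv : ∀ x : M, ∀ n : ℕ, 0 < n → ∃ y : M, n • y = x)
    (A : AddSubgroup M)
    (hAdiv : ∀ a ∈ A, ∀ n : ℕ, 0 < n → ∃ b ∈ A, n • b = a)
    (d₁ d₂ : M) :
    Gset A (d₁ + d₂) ⊆ Gset A d₁ ∪ Gset A d₂ :=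
  Gset_add_subset_union_general M A d₁ d₂
end

section
/- Let A ⊆ B be divisible subgroups of M and d ∈ M. If d is cut-independent from B over A, then H(d/A) ⊆ H(d/B); equivalently, Stab(d/A) ⊆ Stab(d/B). -/
/-!
Over a subgroup `A`, the elements `d + a` and `d` have the same cut exactly when no point of `A`
lies in the closed interval between them, unless they coincide. Let `a ∈ Stab(d/A)` and suppose
some `b ∈ B` lies between `d + a` and `d`. The interval with endpoints `b - a` and `b` lies in `B`
at both ends and contains `d`, so by cut-independence it contains some `a' ∈ A`; then `a'` or
`a' + a` lies between `d + a` and `d`, which is impossible.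
-/

open Set

theorem sameCut_iff_forall_mem_uIcc {M : Type*} [AddCommGroup M] [LinearOrder M]
    [IsOrderedAddMonoid M] (A : AddSubgroup M) (c d : M) :
    SameCut A c d ↔ ∀ x ∈ A, x ∈ uIcc c d → c = d := by
  simp only [SameCut, mem_uIcc]
  grind

theorem CutIndep.exists_mem_uIcc {M : Type*} [AddCommGroup M] [LinearOrder M]
    [IsOrderedAddMonoid M] {A B : AddSubgroup M} {d : M} (hind : CutIndep A B d) (hAB : A ≤ B)
    {a b : M} (ha : a ∈ A) (hb : b ∈ B) (hbd : b ∈ uIcc (d + a) d) :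
    ∃ x ∈ A, x ∈ uIcc (d + a) d := by
  have hba : b - a ∈ B := B.sub_mem hb (hAB ha)
  rcases le_total 0 a with h | h
  · rw [uIcc_of_ge (le_add_of_nonneg_right h)] at hbd ⊢
    obtain ⟨x, hx, hbx, hxb⟩ := hind (b - a) hba b hb (by grind) hbd.1
    rcases le_total d x with hdx | hxd
    · exact ⟨x, hx, hdx, by grind⟩
    · exact ⟨x + a, A.add_mem hx ha, by grind, by grind⟩
  · rw [uIcc_of_le (add_le_of_nonpos_right h)] at hbd ⊢
    obtain ⟨x, hx, hbx, hxb⟩ := hind b hb (b - a) hba hbd.2 (by grind)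
    rcases le_total x d with hxd | hdx
    · exact ⟨x, hx, by grind, hxd⟩
    · exact ⟨x + a, A.add_mem hx ha, by grind, by grind⟩

theorem stab_subset_stab_of_cutIndep {M : Type*} [AddCommGroup M] [LinearOrder M]
    [IsOrderedAddMonoid M] {A B : AddSubgroup M} (hAB : A ≤ B) {d : M}
    (hind : CutIndep A B d) : Stab A d ⊆ Stab B d := by
  rintro a ⟨ha, hcut⟩
  refine ⟨hAB ha, (sameCut_iff_forall_mem_uIcc B _ _).2 fun b hb hbd => ?_⟩
  obtain ⟨x, hx, hxd⟩ := hind.exists_mem_uIcc hAB ha hb hbd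
  exact (sameCut_iff_forall_mem_uIcc A _ _).1 hcut x hx hxd

theorem hset_subset_hset {M : Type*} [AddCommGroup M] [LinearOrder M] [IsOrderedAddMonoid M]
    {A B : AddSubgroup M} {d : M} (h : Stab A d ⊆ Stab B d) : Hset A d ⊆ Hset B d :=
  fun _ ⟨a, ha, hle⟩ => ⟨a, h ha, hle⟩

theorem Hset_subset_of_cutIndep_general (M : Type*) [AddCommGroup M] [LinearOrder M] [IsOrderedAddMonoid M]
    (A B : AddSubgroup M) (hAB : A ≤ B)
    (d : M) (hind : CutIndep A B d) :
    Hset A d ⊆ Hset B d ∧ Stab A d ⊆ Stab B d :=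
  have hstab := stab_subset_stab_of_cutIndep hAB hind
  ⟨hset_subset_hset hstab, hstab⟩

/-- If `d` is cut-independent from `B` over `A`, then `H(d/A) ⊆ H(d/B)`;
equivalently, `Stab(d/A) ⊆ Stab(d/B)`. -/
theorem Hset_subset_of_cutIndep (M : Type*) [AddCommGroup M] [LinearOrder M] [IsOrderedAddMonoid M]
    (hMdiv : ∀ x : M, ∀ n : ℕ, 0 < n → ∃ y : M, n • y = x)
    (A B : AddSubgroup M) (hAB : A ≤ B)
    (hAdiv : ∀ a ∈ A, ∀ n : ℕ, 0 < n → ∃ b ∈ A, n • b = a)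
    (hBdiv : ∀ b ∈ B, ∀ n : ℕ, 0 < n → ∃ b' ∈ B, n • b' = b)
    (d : M) (hind : CutIndep A B d) :
    Hset A d ⊆ Hset B d ∧ Stab A d ⊆ Stab B d :=
  Hset_subset_of_cutIndep_general M A B hAB d hind
end

section
/- Let d ∈ M be Archimedean over A (i.e., d admits no ramifier over A). Then for every d' ∈ M, d' and d realize the same cut over A if and only if d − d' ∈ G(d/A). In other words, the cut of d over A coincides with the coset d + G(d/A). -/
/-! Stabilisers of the cut are shorter than the distance from `d` to any point of `A` (double
them), and anything between `d'` and a point of the cut of `d` is again in the cut. Since `d` is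
Archimedean over `A`, each distance `|d - b|`, `b ∈ A`, is comparable to some element of `A`;
dividing it produces an `a ∈ A` with `|a| ≤ |d - b|` some multiple of which exceeds `|d - b|`, so
`a` is not a stabiliser. Hence `d'` lies in the cut of `d` exactly when `|d - d'|` is below every
non-stabiliser. -/

lemma AddSubgroup.abs_mem_iff {G : Type*} [AddGroup G] [LinearOrder G] (S : AddSubgroup G) {a : G} :
    |a| ∈ S ↔ a ∈ S := by
  rcases abs_choice a with h | h <;> simp [h]

section OrderedGroup

variable {M : Type*} [AddCommGroup M] [LinearOrder M] [IsOrderedAddMonoid M]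

section Cut

variable {A : AddSubgroup M} {c d d' : M}

lemma SameCut.rfl : SameCut A d d := fun _ _ => ⟨Iff.rfl, Iff.rfl⟩

lemma SameCut.of_mem_uIcc (hcut : SameCut A d' d) (hc : c ∈ Set.uIcc d' d) : SameCut A c d := by
  intro a ha
  have := hcut a ha
  rw [Set.mem_uIcc] at hc
  constructor <;> constructor <;> intro h <;> rcases hc with ⟨_, _⟩ | ⟨_, _⟩ <;> grind

lemma sameCut_iff_eq_of_mem (hd : d ∈ A) : SameCut A d' d ↔ d' = d := by
  refine ⟨fun h => le_antisymm ((h d hd).2.2 le_rfl) ((h d hd).1.2 le_rfl), ?_⟩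
  rintro rfl
  exact SameCut.rfl

lemma sameCut_of_abs_sub_lt (h : ∀ b ∈ A, |d - d'| < |d - b|) : SameCut A d' d := by
  intro b hb
  have hlt := h b hb
  have := le_abs_self (d - d')
  have := neg_abs_le (d - d')
  rcases le_total b d with hbd | hdb
  · rw [abs_of_nonneg (sub_nonneg.2 hbd)] at hlt
    constructor <;> constructor <;> intro <;> grind
  · rw [abs_of_nonpos (sub_nonpos.2 hdb)] at hlt
    constructor <;> constructor <;> intro <;> grind

end Cut

def stabAddSubgroup (A : AddSubgroup M) (d : M) : AddSubgroup M where
  carrier := Stab A d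
  zero_mem' := ⟨A.zero_mem, by simpa using SameCut.rfl⟩
  add_mem' := by
    rintro s t ⟨hsA, hs⟩ ⟨htA, ht⟩
    refine ⟨A.add_mem hsA htA, fun b hb => ?_⟩
    have h₁ := hs (b - t) (A.sub_mem hb htA)
    have h₂ := ht b hb
    rw [← add_assoc, ← sub_le_iff_le_add, ← le_sub_iff_add_le, h₁.1, h₁.2, sub_le_iff_le_add,
      le_sub_iff_add_le]
    exact h₂
  neg_mem' := by
    rintro s ⟨hsA, hs⟩
    refine ⟨A.neg_mem hsA, fun b hb => ?_⟩
    have h := hs (b + s) (A.add_mem hb hsA)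
    rw [← sub_eq_add_neg, le_sub_iff_add_le, sub_le_iff_le_add, ← h.1, ← h.2]
    exact ⟨add_le_add_iff_right s, add_le_add_iff_right s⟩

@[simp]
lemma mem_stabAddSubgroup {A : AddSubgroup M} {d a : M} : a ∈ stabAddSubgroup A d ↔ a ∈ Stab A d :=
  Iff.rfl

section Stab

variable {A : AddSubgroup M} {a b d d' s : M}

lemma abs_le_abs_sub_of_mem_Stab (hs : s ∈ Stab A d) (hb : b ∈ A) : |s| ≤ |d - b| := by
  have habs : |s| ∈ Stab A d := (stabAddSubgroup A d).abs_mem_iff.2 hs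
  rcases le_total b d with hbd | hdb
  · have := (((stabAddSubgroup A d).neg_mem habs).2 b hb).1.2 hbd
    rw [abs_of_nonneg (sub_nonneg.2 hbd)]
    grind
  · have := (habs.2 b hb).2.2 hdb
    rw [abs_of_nonpos (sub_nonpos.2 hdb)]
    grind

lemma abs_lt_abs_sub_of_mem_Stab (hs : s ∈ Stab A d) (hb : b ∈ A) (hbd : b ≠ d) :
    |s| < |d - b| := by
  have h2s := abs_le_abs_sub_of_mem_Stab ((stabAddSubgroup A d).add_mem hs hs) hb
  have hpos : 0 < |d - b| := abs_pos.2 (sub_ne_zero.2 hbd.symm)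
  have := abs_nonneg s
  have := abs_nsmul 2 s
  rw [two_nsmul, two_nsmul] at this
  grind

lemma mem_Stab_of_abs_le_abs_sub (hcut : SameCut A d' d) (ha : a ∈ A) (h : |a| ≤ |d - d'|) :
    a ∈ Stab A d := by
  have haA : |a| ∈ A := A.abs_mem_iff.2 ha
  rw [← mem_stabAddSubgroup, ← AddSubgroup.abs_mem_iff]
  rcases le_total d' d with hd'd | hdd'
  · rw [abs_of_nonneg (sub_nonneg.2 hd'd)] at h
    rw [← neg_mem_iff]
    exact ⟨A.neg_mem haA, hcut.of_mem_uIcc (Set.mem_uIcc_of_le (by grind) (by grind))⟩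
  · rw [abs_of_nonpos (sub_nonpos.2 hdd')] at h
    exact ⟨haA, hcut.of_mem_uIcc (Set.mem_uIcc_of_ge (by grind) (by grind))⟩

lemma exists_notMem_Stab_abs_le_abs_sub (hAdiv : ∀ a ∈ A, ∀ n : ℕ, 0 < n → ∃ b ∈ A, n • b = a)
    (harch : ¬ Ramified A d) (hb : b ∈ A) (hbd : b ≠ d) :
    ∃ a ∈ A, a ∉ Stab A d ∧ |a| ≤ |d - b| := by
  obtain ⟨a₀, ha₀, ⟨n, hn⟩, ⟨m, hm⟩⟩ : DeltaMem (d - b) A := by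
    by_contra h
    exact harch ⟨b, hb, h⟩
  -- dividing `a₀` by `m + 1` pushes it below `|d - b|` without leaving its Archimedean class
  obtain ⟨a, ha, rfl⟩ := hAdiv a₀ ha₀ (m + 1) m.succ_pos
  rw [abs_nsmul] at hn hm
  refine ⟨a, ha, fun haS => ?_, ?_⟩
  · have := abs_lt_abs_sub_of_mem_Stab
      ((stabAddSubgroup A d).nsmul_mem (n := (m + 1) * n) haS) hb hbd
    rw [abs_nsmul, mul_nsmul] at this
    exact (hn.trans_lt this).false
  · refine le_of_nsmul_le_nsmul_right m.succ_ne_zero (hm.trans ?_)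
    exact nsmul_le_nsmul_left (abs_nonneg _) m.le_succ

end Stab

end OrderedGroup

theorem sameCut_iff_sub_mem_Gset_of_arch_general (M : Type*) [AddCommGroup M] [LinearOrder M] [IsOrderedAddMonoid M]
    (A : AddSubgroup M)
    (hAdiv : ∀ a ∈ A, ∀ n : ℕ, 0 < n → ∃ b ∈ A, n • b = a)
    (d : M) (harch : ¬ Ramified A d) :
    ∀ d' : M, SameCut A d' d ↔ d - d' ∈ Gset A d := by
  intro d'
  by_cases hd : d ∈ A
  · simp only [Gset, if_pos hd, Set.mem_singleton_iff, sub_eq_zero, sameCut_iff_eq_of_mem hd, eq_comm]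
  simp only [Gset, if_neg hd, ← abs_lt]
  refine ⟨fun hcut a ha haS => ?_, fun h => sameCut_of_abs_sub_lt fun b hb => ?_⟩
  · exact lt_of_not_ge fun hle => haS (mem_Stab_of_abs_le_abs_sub hcut ha hle)
  · obtain ⟨a, ha, haS, hle⟩ :=
      exists_notMem_Stab_abs_le_abs_sub hAdiv harch hb (ne_of_mem_of_not_mem hb hd)
    exact (h a ha haS).trans_le hle

/-- If `d` is Archimedean over `A` (admits no ramifier over `A`), then the cut of `d`
over `A` coincides with the coset `d + G(d/A)`: for every `d'`, `d'` and `d`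
realize the same cut over `A` iff `d − d' ∈ G(d/A)`. -/
theorem sameCut_iff_sub_mem_Gset_of_arch (M : Type*) [AddCommGroup M] [LinearOrder M] [IsOrderedAddMonoid M]
    (hMdiv : ∀ x : M, ∀ n : ℕ, 0 < n → ∃ y : M, n • y = x)
    (A : AddSubgroup M)
    (hAdiv : ∀ a ∈ A, ∀ n : ℕ, 0 < n → ∃ b ∈ A, n • b = a)
    (d : M) (harch : ¬ Ramified A d) :
    ∀ d' : M, SameCut A d' d ↔ d - d' ∈ Gset A d :=
  sameCut_iff_sub_mem_Gset_of_arch_general M A hAdiv d harch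
end

section
/- Let d ∈ M be ramified over A and let a ∈ A be a ramifier of d over A. Then for every d' ∈ M, d' and d realize the same cut over A if and only if: d' − a ∈ G(d/A), d' − a ∉ H(d/A), and (a < d' ↔ a < d). In other words, the cut of d over A is the connected component of (a + G(d/A)) ∖ (a + H(d/A)) containing d. -/
/-!
Write `e = d - a`. As `a` is a ramifier, no element of `A` lies in the Archimedean class of `e`,
so every `c ∈ A` is infinitesimal or infinite relative to `e`. Translating by `a`, the cut of `d`
becomes that of `e ∉ A`, which is determined by the sign of `e` and by which `c ∈ A` satisfy
`|c| < |e|`. For `c ∈ A` this comparison is Archimedean, hence unchanged when an infinitesimal is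
added to `e`; this identifies `Stab(d/A)` with the elements of `A` infinitesimal relative to `e`,
and then `G(d/A)` and the complement of `H(d/A)` encode exactly the two families of bounds.
-/

open ArchimedeanClass

theorem AddSubgroup.abs_mem {M : Type*} [AddCommGroup M] [LinearOrder M] {A : AddSubgroup M}
    {c : M} (hc : c ∈ A) : |c| ∈ A := by
  rcases abs_choice c with h | h <;> rw [h]
  exacts [hc, A.neg_mem hc]

section

variable {M : Type*} [AddCommGroup M] [LinearOrder M] [IsOrderedAddMonoid M]

theorem abs_lt_abs_of_mk_lt_mk {a b : M} (h : mk a < mk b) : |b| < |a| := by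
  simpa using mk_lt_mk.mp h 1

theorem abs_lt_abs_iff_of_mk_ne {a b : M} (h : mk a ≠ mk b) : |a| < |b| ↔ mk b < mk a :=
  ⟨fun hab => (mk_le_mk_of_abs hab.le).lt_of_ne h.symm, abs_lt_abs_of_mk_lt_mk⟩

theorem le_iff_pos_of_abs_lt_abs {a b : M} (h : |a| < |b|) : a ≤ b ↔ 0 < b := by
  cases abs_cases a <;> cases abs_cases b <;> grind

theorem le_iff_nonpos_of_abs_lt_abs {a b : M} (h : |a| < |b|) : b ≤ a ↔ b ≤ 0 := by
  cases abs_cases a <;> cases abs_cases b <;> grind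

section SameCut

variable {A : AddSubgroup M} {x y : M}

theorem sameCut_sub_iff {a : M} (ha : a ∈ A) : SameCut A (x - a) (y - a) ↔ SameCut A x y := by
  refine ⟨fun h b hb => ?_, fun h c hc => ?_⟩
  · simpa using h (b - a) (A.sub_mem hb ha)
  · simpa [le_sub_iff_add_le, sub_le_iff_le_add] using h (c + a) (A.add_mem hc ha)

theorem SameCut.lt_abs_iff (h : SameCut A x y) {c : M} (hc : c ∈ A) :
    |c| < |x| ↔ |c| < |y| := by
  have hc' := AddSubgroup.abs_mem hc
  have hneg : -x ≤ |c| ↔ -y ≤ |c| := neg_le.trans ((h _ (A.neg_mem hc')).1.trans neg_le.symm)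
  rw [lt_abs, lt_abs]
  simp only [← not_le, (h _ hc').2, hneg]

theorem SameCut.abs_lt_iff (h : SameCut A x y) {c : M} (hc : c ∈ A) :
    |x| < |c| ↔ |y| < |c| := by
  have hc' := AddSubgroup.abs_mem hc
  rw [abs_lt, abs_lt]
  simp only [← not_le, (h _ hc').1, (h _ (A.neg_mem hc')).2]

theorem SameCut.pos_iff (h : SameCut A x y) : 0 < x ↔ 0 < y := by
  simp only [← not_le, (h 0 A.zero_mem).2]

theorem sameCut_iff_abs (hy : y ∉ A) :
    SameCut A x y ↔ (0 < x ↔ 0 < y) ∧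
      ∀ c ∈ A, (|c| < |y| → |c| < |x|) ∧ (|y| < |c| → |x| < |c|) := by
  refine ⟨fun h => ⟨h.pos_iff, fun c hc => ⟨(h.lt_abs_iff hc).2, (h.abs_lt_iff hc).2⟩⟩,
    ?_⟩
  rintro ⟨hsign, hbounds⟩ c hc
  have hcy : |c| ≠ |y| := by
    intro h
    rcases abs_eq_abs.mp h with rfl | rfl
    exacts [hy hc, hy (by simpa using A.neg_mem hc)]
  rcases hcy.lt_or_gt with hlt | hgt
  · have hx := (hbounds c hc).1 hlt
    rw [le_iff_pos_of_abs_lt_abs hx, le_iff_pos_of_abs_lt_abs hlt,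
      le_iff_nonpos_of_abs_lt_abs hx, le_iff_nonpos_of_abs_lt_abs hlt, ← not_lt, ← not_lt,
      hsign]
    exact ⟨Iff.rfl, Iff.rfl⟩
  · have hx := (hbounds c hc).2 hgt
    rw [le_iff_pos_of_abs_lt_abs hx, le_iff_pos_of_abs_lt_abs hgt,
      le_iff_nonpos_of_abs_lt_abs hx, le_iff_nonpos_of_abs_lt_abs hgt]
    exact ⟨Iff.rfl, Iff.rfl⟩

end SameCut

namespace IsRamifier

variable {A : AddSubgroup M} {d a : M}

theorem mk_ne (hram : IsRamifier A d a) {c : M} (hc : c ∈ A) : mk c ≠ mk (d - a) :=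
  fun h => hram.2 ⟨c, hc, mk_eq_mk.mp h⟩

theorem abs_lt_iff (hram : IsRamifier A d a) {c : M} (hc : c ∈ A) :
    |c| < |d - a| ↔ mk (d - a) < mk c :=
  abs_lt_abs_iff_of_mk_ne (hram.mk_ne hc)

theorem lt_abs_iff (hram : IsRamifier A d a) {c : M} (hc : c ∈ A) :
    |d - a| < |c| ↔ mk c < mk (d - a) :=
  abs_lt_abs_iff_of_mk_ne (hram.mk_ne hc).symm

theorem sub_notMem (hram : IsRamifier A d a) : d - a ∉ A :=
  fun h => hram.mk_ne h rfl

theorem notMem (hram : IsRamifier A d a) : d ∉ A :=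
  fun h => hram.sub_notMem (A.sub_mem h hram.1)

theorem not_abs_lt_iff (hram : IsRamifier A d a) {c : M} (hc : c ∈ A) :
    ¬ |c| < |d - a| ↔ |d - a| < |c| := by
  rw [hram.abs_lt_iff hc, hram.lt_abs_iff hc, not_lt, le_iff_lt_or_eq,
    or_iff_left (hram.mk_ne hc)]

theorem mem_stab_iff (hram : IsRamifier A d a) {s : M} :
    s ∈ Stab A d ↔ s ∈ A ∧ |s| < |d - a| := by
  refine and_congr_right fun hs => ?_
  rw [← sameCut_sub_iff hram.1, add_sub_right_comm, sameCut_iff_abs hram.sub_notMem]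
  set e := d - a
  constructor
  · rintro ⟨hsign, hbounds⟩
    by_contra hse
    have hes := (hram.not_abs_lt_iff hs).mp hse
    have hsum := (hbounds s hs).2 hes
    -- `e + s` has the sign of `s`, so with the sign of `e` it would have `|e + s| = |e| + |s|`
    cases abs_cases e <;> cases abs_cases s <;> cases abs_cases (e + s) <;> grind
  · intro hse
    have hmk : mk (e + s) = mk e := mk_add_eq_mk_left ((hram.abs_lt_iff hs).mp hse)
    have hsign : 0 < e + s ↔ 0 < e := by cases abs_cases e <;> cases abs_cases s <;> grind
    refine ⟨hsign, fun c hc => ⟨fun hce => ?_, fun hec => ?_⟩⟩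
    · exact abs_lt_abs_of_mk_lt_mk (hmk ▸ (hram.abs_lt_iff hc).mp hce)
    · exact abs_lt_abs_of_mk_lt_mk (hmk ▸ (hram.lt_abs_iff hc).mp hec)

theorem mem_gset_iff (hram : IsRamifier A d a) {x : M} :
    x ∈ Gset A d ↔ ∀ c ∈ A, |d - a| < |c| → |x| < |c| := by
  simp only [Gset, if_neg hram.notMem, Set.mem_ofPred_eq, ← abs_lt]
  refine forall₂_congr fun c hc => ?_
  rw [hram.mem_stab_iff, not_and, imp_iff_right hc, hram.not_abs_lt_iff hc]

theorem notMem_hset_iff (hram : IsRamifier A d a) {x : M} :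
    x ∉ Hset A d ↔ ∀ c ∈ A, |c| < |d - a| → |c| < |x| := by
  simp only [Hset, Set.mem_ofPred_eq, hram.mem_stab_iff, not_exists, not_and, not_le, and_imp]

end IsRamifier

end

theorem sameCut_iff_of_ramified_general (M : Type*) [AddCommGroup M] [LinearOrder M] [IsOrderedAddMonoid M]
    (A : AddSubgroup M)
    (d a : M) (hram : IsRamifier A d a) :
    ∀ d' : M, SameCut A d' d ↔
      (d' - a ∈ Gset A d ∧ d' - a ∉ Hset A d ∧ (a < d' ↔ a < d)) := by
  intro d'
  rw [← sameCut_sub_iff hram.1, sameCut_iff_abs hram.sub_notMem, hram.mem_gset_iff,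
    hram.notMem_hset_iff, sub_pos, sub_pos]
  simp only [imp_and, forall_and]
  tauto

/-- If `d` is ramified over `A` with ramifier `a`, then the cut of `d` over `A` is the
connected component of `(a + G(d/A)) ∖ (a + H(d/A))` containing `d`: for every `d'`,
`d'` and `d` realize the same cut over `A` iff `d' − a ∈ G(d/A)`, `d' − a ∉ H(d/A)`,
and `d'` lies on the same side of `a` as `d`. -/
theorem sameCut_iff_of_ramified (M : Type*) [AddCommGroup M] [LinearOrder M] [IsOrderedAddMonoid M]
    (hMdiv : ∀ x : M, ∀ n : ℕ, 0 < n → ∃ y : M, n • y = x)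
    (A : AddSubgroup M)
    (hAdiv : ∀ a ∈ A, ∀ n : ℕ, 0 < n → ∃ b ∈ A, n • b = a)
    (d a : M) (hram : IsRamifier A d a) :
    ∀ d' : M, SameCut A d' d ↔
      (d' - a ∈ Gset A d ∧ d' - a ∉ Hset A d ∧ (a < d' ↔ a < d)) :=
  sameCut_iff_of_ramified_general M A d a hram
end

section
/- Let A ⊆ B be divisible subgroups of M and let d ∈ M ∖ A be Archimedean over A. If d is cut-independent from B over A, then G(d/B) = G(d/A) (as subsets of M). -/
/-!
A point `b₀ ∈ B` witnessing `b ∉ Stab(d/B)` traps `d` in `[b₀, b₀ + |b|]`; cutting this interval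
into pieces of length `ε ∈ B` and applying cut-independence to the piece containing `d`
approximates `d` from `A` to within `ε`. For `a₀ ∈ A` with `|d - a₀| ≤ |b|`, the Archimedean
hypothesis and divisibility of `A` give `c ∈ A` with `0 < c ≤ |d - a₀|` and `d - a₀` a bounded
multiple of `c`, so `d` is also approximated from `A` to within `c`; the approximant lies on one side
of `d`, within `c`, so `c` or `-c` leaves `Stab(d/A)`. Thus each element of `B ∖ Stab(d/B)`
dominates one of `A ∖ Stab(d/A)`, while `A ∖ Stab(d/A) ⊆ B ∖ Stab(d/B)` because `A ≤ B`.
-/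

section

variable {M : Type*} [AddCommGroup M] [LinearOrder M] [IsOrderedAddMonoid M]

lemma SameCut.mono {A B : AddSubgroup M} (hAB : A ≤ B) {c d : M} (h : SameCut B c d) :
    SameCut A c d :=
  fun a ha => h a (hAB ha)

lemma Gset_of_notMem {A : AddSubgroup M} {d : M} (hd : d ∉ A) :
    Gset A d = {x | ∀ a ∈ A, a ∉ Stab A d → -|a| < x ∧ x < |a|} := by
  classical
  rw [Gset, if_neg hd]

lemma exists_le_le_add_abs_of_notMem_Stab {B : AddSubgroup M} {d b : M} (hbB : b ∈ B)
    (hb : b ∉ Stab B d) : ∃ b₀ ∈ B, b₀ ≤ d ∧ d ≤ b₀ + |b| := by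
  have hcut : ¬ SameCut B (d + b) d := fun h => hb ⟨hbB, h⟩
  simp only [SameCut, not_forall] at hcut
  obtain ⟨e, heB, he⟩ := hcut
  rcases le_total 0 b with hb0 | hb0
  · refine ⟨e - b, sub_mem heB hbB, ?_, ?_⟩ <;> grind
  · refine ⟨e, heB, ?_, ?_⟩ <;> grind

lemma exists_mem_notMem_Stab_abs_le_of_abs_sub_le {A : AddSubgroup M} {d a c : M}
    (hd : d ∉ A) (haA : a ∈ A) (hcA : c ∈ A) (hac : |d - a| ≤ c) :
    ∃ s ∈ A, s ∉ Stab A d ∧ |s| ≤ c := by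
  have hc : 0 ≤ c := (abs_nonneg _).trans hac
  obtain ⟨hdac, hadc⟩ := abs_sub_le_iff.1 hac
  rcases (show a ≠ d from fun h => hd (h ▸ haA)).lt_or_gt with had | hda
  · refine ⟨-c, neg_mem hcA, fun hs => ?_, by rw [abs_neg, abs_of_nonneg hc]⟩
    exact not_le.2 had ((hs.2 a haA).2.1 (by grind))
  · refine ⟨c, hcA, fun hs => ?_, (abs_of_nonneg hc).le⟩
    exact not_le.2 hda ((hs.2 a haA).1.1 (by grind))

lemma DeltaMem.exists_pos_le_abs {A : AddSubgroup M}
    (hAdiv : ∀ a ∈ A, ∀ n : ℕ, 0 < n → ∃ b ∈ A, n • b = a) {x : M} (hx : x ≠ 0)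
    (h : DeltaMem x A) : ∃ c ∈ A, 0 < c ∧ c ≤ |x| ∧ ∃ k : ℕ, |x| ≤ k • c := by
  obtain ⟨a, haA, ⟨n, hxa⟩, ⟨m, hax⟩⟩ := h
  have ha : 0 < |a| := by
    by_contra! ha
    simp [abs_nonpos_iff.1 ha, hx] at hxa
  have hm : 0 < m := Nat.pos_of_ne_zero fun hm => by simpa [hm] using ha.trans_le hax
  obtain ⟨c, hcA, hc⟩ := hAdiv |a| (abs_mem_iff.2 haA) m hm
  refine ⟨c, hcA, (nsmul_pos_iff hm.ne').1 (hc ▸ ha), le_of_nsmul_le_nsmul_right hm.ne' (hc ▸ hax),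
    n * m, ?_⟩
  rwa [mul_nsmul', hc]

lemma CutIndep.notMem {A B : AddSubgroup M} {d : M} (hind : CutIndep A B d) (hd : d ∉ A) :
    d ∉ B := by
  intro hdB
  obtain ⟨a, haA, hda, had⟩ := hind d hdB d hdB le_rfl le_rfl
  exact hd (le_antisymm had hda ▸ haA)

lemma CutIndep.exists_abs_sub_le {A B : AddSubgroup M} {d : M} (hind : CutIndep A B d)
    {ε : M} (hεB : ε ∈ B) (hε : 0 ≤ ε) (k : ℕ) :
    ∀ b ∈ B, b ≤ d → d ≤ b + k • ε → ∃ a ∈ A, |d - a| ≤ ε := by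
  induction k with
  | zero =>
    intro b hbB hbd hdb
    obtain ⟨a, haA, hba, hab⟩ := hind b hbB b hbB hbd (by simpa using hdb)
    have hda : d = a := by simp only [zero_nsmul, add_zero] at hdb; order
    exact ⟨a, haA, by simpa [hda] using hε⟩
  | succ k ih =>
    intro b hbB hbd hdb
    by_cases hdε : d ≤ b + ε
    · obtain ⟨a, haA, hba, hab⟩ := hind b hbB (b + ε) (add_mem hbB hεB) hbd hdε
      refine ⟨a, haA, ?_⟩
      simpa [abs_of_nonneg hε] using Set.abs_sub_le_of_uIcc_subset_uIcc
        (Set.uIcc_subset_uIcc (Set.mem_uIcc_of_le hba hab) (Set.mem_uIcc_of_le hbd hdε))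
    · refine ih (b + ε) (add_mem hbB hεB) (not_le.1 hdε).le ?_
      rwa [add_assoc, ← succ_nsmul']

lemma CutIndep.exists_mem_notMem_Stab_abs_le {A B : AddSubgroup M} (hAB : A ≤ B)
    (hAdiv : ∀ a ∈ A, ∀ n : ℕ, 0 < n → ∃ b ∈ A, n • b = a) {d : M} (hd : d ∉ A)
    (harch : ¬ Ramified A d) (hind : CutIndep A B d) {b : M} (hbB : b ∈ B)
    (hb : b ∉ Stab B d) : ∃ a ∈ A, a ∉ Stab A d ∧ |a| ≤ |b| := by
  obtain ⟨b₀, hb₀B, hb₀d, hdb₀⟩ := exists_le_le_add_abs_of_notMem_Stab hbB hb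
  obtain ⟨a₀, ha₀A, hda₀⟩ := hind.exists_abs_sub_le (abs_mem_iff.2 hbB) (abs_nonneg b) 1
    b₀ hb₀B hb₀d (by rwa [one_nsmul])
  have hne : d - a₀ ≠ 0 := sub_ne_zero.2 fun h => hd (h ▸ ha₀A)
  have hmem : DeltaMem (d - a₀) A := by
    by_contra h
    exact harch ⟨a₀, ha₀A, h⟩
  obtain ⟨c, hcA, hc, hcd, k, hdk⟩ := hmem.exists_pos_le_abs hAdiv hne
  obtain ⟨hda₀k, ha₀dk⟩ := abs_sub_le_iff.1 hdk
  obtain ⟨a, haA, hda⟩ := hind.exists_abs_sub_le (hAB hcA) hc.le (2 * k) (a₀ - k • c)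
    (sub_mem (hAB ha₀A) (nsmul_mem (hAB hcA) k)) (by grind) (by rw [two_mul, add_nsmul]; grind)
  obtain ⟨s, hsA, hs, hsc⟩ := exists_mem_notMem_Stab_abs_le_of_abs_sub_le hd haA hcA hda
  exact ⟨s, hsA, hs, hsc.trans (hcd.trans hda₀)⟩

end

theorem Gset_eq_of_arch_cutIndep_general (M : Type*) [AddCommGroup M] [LinearOrder M] [IsOrderedAddMonoid M]
    (A B : AddSubgroup M) (hAB : A ≤ B)
    (hAdiv : ∀ a ∈ A, ∀ n : ℕ, 0 < n → ∃ b ∈ A, n • b = a)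
    (d : M) (hd : d ∉ A) (harch : ¬ Ramified A d)
    (hind : CutIndep A B d) :
    Gset B d = Gset A d := by
  rw [Gset_of_notMem (hind.notMem hd), Gset_of_notMem hd]
  ext x
  constructor
  · intro hx a haA ha
    exact hx a (hAB haA) fun hB => ha ⟨haA, hB.2.mono hAB⟩
  · intro hx b hbB hb
    obtain ⟨a, haA, ha, hab⟩ := hind.exists_mem_notMem_Stab_abs_le hAB hAdiv hd harch hbB hb
    obtain ⟨hxa, hax⟩ := hx a haA ha
    exact ⟨(neg_le_neg hab).trans_lt hxa, hax.trans_le hab⟩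

/-- If `d ∈ M ∖ A` is Archimedean over `A` and cut-independent from `B` over `A`,
then `G(d/B) = G(d/A)` (as subsets of `M`). -/
theorem Gset_eq_of_arch_cutIndep (M : Type*) [AddCommGroup M] [LinearOrder M] [IsOrderedAddMonoid M]
    (hMdiv : ∀ x : M, ∀ n : ℕ, 0 < n → ∃ y : M, n • y = x)
    (A B : AddSubgroup M) (hAB : A ≤ B)
    (hAdiv : ∀ a ∈ A, ∀ n : ℕ, 0 < n → ∃ b ∈ A, n • b = a)
    (hBdiv : ∀ b ∈ B, ∀ n : ℕ, 0 < n → ∃ b' ∈ B, n • b' = b)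
    (d : M) (hd : d ∉ A) (harch : ¬ Ramified A d)
    (hind : CutIndep A B d) :
    Gset B d = Gset A d :=
  Gset_eq_of_arch_cutIndep_general M A B hAB hAdiv d hd harch hind
end

section
/- Let A ⊆ B be divisible subgroups of M, let d ∈ M be ramified over A, and let a ∈ A be a ramifier of d over A. If d is cut-independent from B over A, then Δ(d − a) ∉ Δ(B), i.e., there is no b ∈ B with Δ(d − a) = Δ(b). -/
/-!
Suppose `Δ(d - a) = Δ(b)` with `b ∈ B`. Dividing `|b|` in `B` gives `p ∈ B` with
`p ≤ |d - a| ≤ k • p`, so `d` lies in `[a + p, a + k • p]` or in `[a - k • p, a - p]`, intervals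
with endpoints in `B`.
Cut-independence puts some `a' ∈ A` there too, and then `Δ(a' - a) = Δ(d - a)` with
`a' - a ∈ A`, contradicting that `a` is a ramifier.
-/

section

variable {M : Type*} [AddCommGroup M] [LinearOrder M] [IsOrderedAddMonoid M]

theorem deltaLe_of_abs_le_nsmul_of_le_abs {x y p : M} {k : ℕ} (hx : |x| ≤ k • p)
    (hy : p ≤ |y|) : DeltaLe x y :=
  ⟨k, hx.trans (nsmul_le_nsmul_right hy k)⟩

theorem DeltaEq.exists_mem_le_abs_le_nsmul {B : AddSubgroup M}
    (hBdiv : ∀ b ∈ B, ∀ n : ℕ, 0 < n → ∃ b' ∈ B, n • b' = b) {e b : M} (hb : b ∈ B)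
    (h : DeltaEq e b) : ∃ p ∈ B, 0 ≤ p ∧ p ≤ |e| ∧ ∃ k : ℕ, |e| ≤ k • p := by
  obtain ⟨⟨n, hen⟩, ⟨m, hbe⟩⟩ := h
  obtain ⟨p, hpB, hp⟩ := hBdiv |b| (abs_mem_iff.mpr hb) (m + 1) m.succ_pos
  have hbe' : (m + 1) • p ≤ (m + 1) • |e| :=
    hp ▸ hbe.trans (nsmul_le_nsmul_left (abs_nonneg e) m.le_succ)
  refine ⟨p, hpB, (nsmul_nonneg_iff m.succ_ne_zero).mp (hp ▸ abs_nonneg b),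
    (nsmul_le_nsmul_iff_right m.succ_ne_zero).mp hbe', n * (m + 1), ?_⟩
  rwa [mul_nsmul', hp]

namespace CutIndep

variable {A B : AddSubgroup M} {d : M}

theorem neg (hind : CutIndep A B d) : CutIndep A B (-d) := by
  intro b₁ hb₁ b₂ hb₂ h₁ h₂
  obtain ⟨a, ha, ha₂, ha₁⟩ :=
    hind (-b₂) (B.neg_mem hb₂) (-b₁) (B.neg_mem hb₁) (neg_le.mpr h₂) (le_neg.mpr h₁)
  exact ⟨-a, A.neg_mem ha, le_neg.mpr ha₁, neg_le.mpr ha₂⟩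

theorem exists_mem_Icc_of_sub_mem_Icc (hind : CutIndep A B d) (hAB : A ≤ B) {a p q : M}
    (ha : a ∈ A) (hp : p ∈ B) (hq : q ∈ B) (hd : d - a ∈ Set.Icc p q) :
    ∃ x ∈ A, x ∈ Set.Icc p q := by
  obtain ⟨a', ha', h₁, h₂⟩ := hind (a + p) (B.add_mem (hAB ha) hp) (a + q)
    (B.add_mem (hAB ha) hq) (le_sub_iff_add_le'.mp hd.1) (sub_le_iff_le_add'.mp hd.2)
  exact ⟨a' - a, A.sub_mem ha' ha, le_sub_iff_add_le'.mpr h₁, sub_le_iff_le_add'.mpr h₂⟩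

theorem exists_abs_mem_Icc_of_abs_sub_mem_Icc (hind : CutIndep A B d) (hAB : A ≤ B)
    {a p q : M} (ha : a ∈ A) (hp : p ∈ B) (hq : q ∈ B) (hp₀ : 0 ≤ p)
    (hd : |d - a| ∈ Set.Icc p q) : ∃ x ∈ A, |x| ∈ Set.Icc p q := by
  suffices ∃ x ∈ A, x ∈ Set.Icc p q from
    this.imp fun x ⟨hx, hxI⟩ ↦ ⟨hx, by rwa [abs_of_nonneg (hp₀.trans hxI.1)]⟩
  rcases le_total 0 (d - a) with h | h
  · rw [abs_of_nonneg h] at hd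
    exact hind.exists_mem_Icc_of_sub_mem_Icc hAB ha hp hq hd
  · rw [abs_of_nonpos h, neg_sub, ← neg_sub_neg] at hd
    exact hind.neg.exists_mem_Icc_of_sub_mem_Icc hAB (A.neg_mem ha) hp hq hd

end CutIndep

end

theorem delta_not_mem_of_cutIndep_general (M : Type*) [AddCommGroup M] [LinearOrder M] [IsOrderedAddMonoid M]
    (A B : AddSubgroup M) (hAB : A ≤ B)
    (hBdiv : ∀ b ∈ B, ∀ n : ℕ, 0 < n → ∃ b' ∈ B, n • b' = b)
    (d a : M) (hram : IsRamifier A d a)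
    (hind : CutIndep A B d) :
    ¬ DeltaMem (d - a) B := by
  rintro ⟨b, hb, hdb⟩
  obtain ⟨p, hpB, hp₀, hpd, k, hdk⟩ := hdb.exists_mem_le_abs_le_nsmul hBdiv hb
  obtain ⟨x, hxA, hpx, hxk⟩ := hind.exists_abs_mem_Icc_of_abs_sub_mem_Icc hAB hram.1 hpB
    (B.nsmul_mem hpB k) hp₀ ⟨hpd, hdk⟩
  exact hram.2 ⟨x, hxA, deltaLe_of_abs_le_nsmul_of_le_abs hdk hpx,
    deltaLe_of_abs_le_nsmul_of_le_abs hxk hpd⟩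

/-- If `d` is ramified over `A` with ramifier `a`, and `d` is cut-independent from `B`
over `A`, then `Δ(d − a) ∉ Δ(B)`. -/
theorem delta_not_mem_of_cutIndep (M : Type*) [AddCommGroup M] [LinearOrder M] [IsOrderedAddMonoid M]
    (hMdiv : ∀ x : M, ∀ n : ℕ, 0 < n → ∃ y : M, n • y = x)
    (A B : AddSubgroup M) (hAB : A ≤ B)
    (hAdiv : ∀ a ∈ A, ∀ n : ℕ, 0 < n → ∃ b ∈ A, n • b = a)
    (hBdiv : ∀ b ∈ B, ∀ n : ℕ, 0 < n → ∃ b' ∈ B, n • b' = b)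
    (d a : M) (hram : IsRamifier A d a)
    (hind : CutIndep A B d) :
    ¬ DeltaMem (d - a) B :=
  delta_not_mem_of_cutIndep_general M A B hAB hBdiv d a hram hind
end

section
/- Let G be a torsion-free abelian group and let l be a prime number such that the quotient G⧸lG is finite. Then the cardinality of the quotient G⧸(⋂_{N ≥ 1} l^N G) is at most 2^{ℵ₀} (the cardinality of the continuum). -/
/-!
`G ⧸ ⋂ lᴺG` embeds in `∏ N, G ⧸ lᴺG`. Each factor is finite, since `G ⧸ lᴺ⁺¹G` is covered by
`(G ⧸ lᴺG) × (G ⧸ lG)` through `(a, b) ↦ a + lᴺ b`, and a countable product of countable sets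
has at most `ℵ₀ ^ ℵ₀ = 𝔠` elements.
-/

/-- For an abelian group `G` and `n : ℕ`, the subgroup `nG = {n • x : x ∈ G}`. -/
def nsmulSubgroup (G : Type*) [AddCommGroup G] (n : ℕ) : AddSubgroup G where
  carrier := {x | ∃ y : G, x = n • y}
  zero_mem' := ⟨0, by simp⟩
  add_mem' := by
    rintro a b ⟨y, rfl⟩ ⟨z, rfl⟩
    exact ⟨y + z, by rw [smul_add]⟩
  neg_mem' := by
    rintro a ⟨y, rfl⟩
    exact ⟨-y, by rw [smul_neg]⟩

open Cardinal

universe u v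

theorem AddSubgroup.mk_quotient_iInf_le_continuum {G : Type u} {ι : Type v} [AddGroup G]
    [Countable ι] (H : ι → AddSubgroup G) [∀ i, Countable (G ⧸ H i)] :
    #(G ⧸ ⨅ i, H i) ≤ 𝔠 := by
  rw [← lift_le.{max u v}, lift_continuum]
  calc lift.{max u v} #(G ⧸ ⨅ i, H i) ≤ #(∀ i, G ⧸ H i) := by
        simpa using lift_mk_le_lift_mk_of_injective (quotientiInfEmbedding H).injective
    _ ≤ Cardinal.prod fun _ : ι => ℵ₀ := by
        rw [mk_pi]; exact prod_le_prod _ _ fun i => mk_le_aleph0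
    _ ≤ ℵ₀ ^ ℵ₀ := by
        rw [prod_const, lift_aleph0]
        exact power_le_power_left aleph0_ne_zero (lift_le_aleph0.mpr mk_le_aleph0)
    _ = 𝔠 := aleph0_power_aleph0

theorem finite_quotient_nsmulSubgroup_mul {G : Type*} [AddCommGroup G] {m n : ℕ}
    (hm : Finite (G ⧸ nsmulSubgroup G m)) (hn : Finite (G ⧸ nsmulSubgroup G n)) :
    Finite (G ⧸ nsmulSubgroup G (m * n)) := by
  refine Finite.of_surjective
    (fun p : (G ⧸ nsmulSubgroup G m) × (G ⧸ nsmulSubgroup G n) =>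
      (p.1.out + m • p.2.out : G ⧸ nsmulSubgroup G (m * n))) fun q => ?_
  obtain ⟨x, rfl⟩ := QuotientAddGroup.mk_surjective q
  obtain ⟨y, hy⟩ : -(x : G ⧸ nsmulSubgroup G m).out + x ∈ nsmulSubgroup G m :=
    QuotientAddGroup.eq.mp (QuotientAddGroup.out_eq' _)
  obtain ⟨z, hz⟩ : -(y : G ⧸ nsmulSubgroup G n).out + y ∈ nsmulSubgroup G n :=
    QuotientAddGroup.eq.mp (QuotientAddGroup.out_eq' _)
  refine ⟨((x : G ⧸ nsmulSubgroup G m), (y : G ⧸ nsmulSubgroup G n)),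
    QuotientAddGroup.eq.mpr ⟨z, ?_⟩⟩
  rw [neg_add_eq_iff_eq_add] at hy hz
  set a := (x : G ⧸ nsmulSubgroup G m).out
  set b := (y : G ⧸ nsmulSubgroup G n).out
  show -(a + m • b) + x = (m * n) • z
  rw [hy, hz, smul_add, mul_smul]
  abel

theorem finite_quotient_nsmulSubgroup_pow {G : Type*} [AddCommGroup G] {l : ℕ}
    (hl : Finite (G ⧸ nsmulSubgroup G l)) (N : ℕ) :
    Finite (G ⧸ nsmulSubgroup G (l ^ N)) := by
  induction N with
  | zero =>
    have : nsmulSubgroup G 1 = ⊤ := eq_top_iff.mpr fun x _ => ⟨x, (one_smul ℕ x).symm⟩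
    rw [pow_zero, this]
    infer_instance
  | succ N ih => rw [pow_succ]; exact finite_quotient_nsmulSubgroup_mul ih hl

theorem card_quotient_inter_le_continuum_general (G : Type*) [AddCommGroup G]
    (l : ℕ)
    (hfin : Finite (G ⧸ nsmulSubgroup G l)) :
    Cardinal.mk (G ⧸ ⨅ N ∈ {N : ℕ | 1 ≤ N}, nsmulSubgroup G (l ^ N)) ≤
      2 ^ Cardinal.aleph0 := by
  have := finite_quotient_nsmulSubgroup_pow hfin
  rw [iInf_subtype', two_power_aleph0]
  exact AddSubgroup.mk_quotient_iInf_le_continuum _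

/-- If `G` is a torsion-free abelian group and `l` a prime with `G⧸lG` finite, then the
quotient of `G` by `⋂_{N ≥ 1} l^N G` has cardinality at most `2^ℵ₀`. -/
theorem card_quotient_inter_le_continuum (G : Type*) [AddCommGroup G]
    (htf : ∀ (n : ℕ) (x : G), 0 < n → n • x = 0 → x = 0)
    (l : ℕ) (hl : Nat.Prime l)
    (hfin : Finite (G ⧸ nsmulSubgroup G l)) :
    Cardinal.mk (G ⧸ ⨅ N ∈ {N : ℕ | 1 ≤ N}, nsmulSubgroup G (l ^ N)) ≤
      2 ^ Cardinal.aleph0 :=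
  card_quotient_inter_le_continuum_general G l hfin
end

section
/- Let M be a torsion-free abelian group, D a pure subgroup of M, l a prime number, and N ≥ 1. Suppose e₁, e₂ ∈ M satisfy e₁ − e₂ ∈ l^{N−1}·M, e₁ ∉ D + l^N·M, and e₂ ∉ D + l^N·M. Then for every integer λ, every m ≥ 1, and every d ∈ D: λ·e₁ − d ∈ l^m·M if and only if λ·e₂ − d ∈ l^m·M. (Hence e₁ and e₂ satisfy the same quantifier-free formulas over D built from the divisibility-by-l^m predicates, i.e., they have the same l-type over D.) -/
/-!
Let `e ∉ D + l ^ N M`, `d ∈ D` and `λ • e - d ∈ l ^ m M`; write `λ = l ^ k * μ` with `l ∤ μ`.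
If `m ≥ k + N`, then `d = l ^ k • x` with `x ∈ μ • e + l ^ N M`, and purity together with
torsion-freeness gives `x ∈ D`; since `μ` is prime to `l ^ N`, this puts `e` in `D + l ^ N M`.
So `m < k + N`, i.e. `l ^ m ∣ λ * l ^ (N - 1)`. Applied to `e₁`, this puts
`λ • (e₁ - e₂) ∈ λ l ^ (N - 1) M` into `l ^ m M`, and symmetrically for `e₂`.
-/

theorem IsAddTorsionFree.of_nsmul_eq_zero {M : Type*} [AddCommGroup M]
    (h : ∀ (n : ℕ) (x : M), 0 < n → n • x = 0 → x = 0) : IsAddTorsionFree M where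
  nsmul_right_injective n hn a b hab :=
    sub_eq_zero.1 <| h n _ (Nat.pos_of_ne_zero hn) <| by simpa [nsmul_sub, sub_eq_zero] using hab

namespace AddSubgroup

variable {M : Type*} [AddCommGroup M]

def IsPure (D : AddSubgroup M) : Prop :=
  ∀ n : ℕ, 1 ≤ n → ∀ d ∈ D, (∃ x : M, d = n • x) → ∃ d' ∈ D, d = n • d'

theorem IsPure.mem_of_nsmul_mem [IsAddTorsionFree M] {D : AddSubgroup M} (hD : D.IsPure)
    {n : ℕ} (hn : n ≠ 0) {x : M} (hx : n • x ∈ D) : x ∈ D := by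
  obtain ⟨d, hd, hnd⟩ := hD n (Nat.one_le_iff_ne_zero.2 hn) _ hx ⟨x, rfl⟩
  rwa [nsmul_right_injective hn hnd]

theorem mem_of_zsmul_mem_of_isCoprime (S : AddSubgroup M) {a b : ℤ} (hab : IsCoprime a b)
    {x : M} (ha : a • x ∈ S) (hb : b • x ∈ S) : x ∈ S := by
  obtain ⟨u, v, huv⟩ := hab
  have hx : x = u • a • x + v • b • x := by rw [smul_smul, smul_smul, ← add_smul, huv, one_smul]
  rw [hx]
  exact add_mem (zsmul_mem ha u) (zsmul_mem hb v)

theorem mem_sup_range_nsmul_iff {D : AddSubgroup M} {n : ℕ} {x : M} :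
    x ∈ D ⊔ (nsmulAddMonoidHom n).range ↔ ∃ d ∈ D, ∃ c : M, x = d + n • c := by
  simp [mem_sup, eq_comm]

end AddSubgroup

open AddSubgroup

section

variable {M : Type*} [AddCommGroup M] [IsAddTorsionFree M] {D : AddSubgroup M}

theorem pow_dvd_mul_pow_of_notMem_sup (hD : D.IsPure) {l : ℕ} (hl : l.Prime) {N : ℕ} {e : M}
    (he : e ∉ D ⊔ (nsmulAddMonoidHom (l ^ N)).range) {lam : ℤ} {m : ℕ} {d c : M} (hd : d ∈ D)
    (h : lam • e - d = l ^ m • c) : (l : ℤ) ^ m ∣ lam * l ^ (N - 1) := by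
  rcases eq_or_ne lam 0 with rfl | hlam
  · simp
  have hfin : FiniteMultiplicity (l : ℤ) lam :=
    Int.finiteMultiplicity_iff.2 ⟨by simpa using hl.ne_one, hlam⟩
  obtain ⟨μ, hlam, hμ⟩ := hfin.exists_eq_pow_mul_and_not_dvd
  generalize multiplicity (l : ℤ) lam = k at hlam
  subst hlam
  by_cases hm : m < k + N
  · exact (pow_dvd_pow _ (by omega)).trans (pow_add (l : ℤ) k (N - 1) ▸
      mul_dvd_mul (dvd_mul_right _ μ) dvd_rfl)
  obtain ⟨j, rfl⟩ := Nat.exists_eq_add_of_le (not_lt.1 hm)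
  have hd_eq : l ^ k • (μ • e - l ^ (N + j) • c) = d := by
    simp only [← natCast_zsmul] at h ⊢
    push_cast at h ⊢
    linear_combination (norm := module) h
  have hμe : μ • e - l ^ (N + j) • c ∈ D :=
    hD.mem_of_nsmul_mem (pow_ne_zero _ hl.ne_zero) (hd_eq ▸ hd)
  have hcop : IsCoprime ((l : ℤ) ^ N) μ :=
    ((Nat.prime_iff_prime_int.mp hl).coprime_iff_not_dvd.2 hμ).pow_left
  refine (he (mem_of_zsmul_mem_of_isCoprime _ hcop (mem_sup_right ⟨e, ?_⟩) ?_)).elim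
  · simp [← natCast_zsmul]
  · rw [← sub_add_cancel (μ • e) (l ^ (N + j) • c)]
    refine add_mem (mem_sup_left hμe) (mem_sup_right ⟨l ^ j • c, ?_⟩)
    rw [nsmulAddMonoidHom_apply, smul_smul, ← pow_add]

theorem exists_zsmul_sub_eq_pow_nsmul_of_sub_eq (hD : D.IsPure) {l : ℕ} (hl : l.Prime) {N : ℕ}
    {e₁ e₂ c₀ : M}
    (he₁ : e₁ ∉ D ⊔ (nsmulAddMonoidHom (l ^ N)).range) (hclose : e₁ - e₂ = l ^ (N - 1) • c₀)
    {lam : ℤ} {m : ℕ} {d c : M} (hd : d ∈ D) (h : lam • e₁ - d = l ^ m • c) :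
    ∃ c' : M, lam • e₂ - d = l ^ m • c' := by
  obtain ⟨q, hq⟩ := pow_dvd_mul_pow_of_notMem_sup hD hl he₁ hd h
  refine ⟨c - q • c₀, ?_⟩
  simp only [← natCast_zsmul] at hclose h ⊢
  push_cast at hclose h ⊢
  linear_combination (norm := module) h - lam • hclose - hq • c₀

end

theorem same_l_type_of_close_general (M : Type*) [AddCommGroup M]
    (htf : ∀ (n : ℕ) (x : M), 0 < n → n • x = 0 → x = 0)
    (D : AddSubgroup M)
    (hpure : ∀ n : ℕ, 1 ≤ n → ∀ d ∈ D, (∃ x : M, d = n • x) → ∃ d' ∈ D, d = n • d')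
    (l : ℕ) (hl : Nat.Prime l) (N : ℕ)
    (e₁ e₂ : M)
    (hclose : ∃ c : M, e₁ - e₂ = l ^ (N - 1) • c)
    (h1 : ¬ ∃ d ∈ D, ∃ c : M, e₁ = d + l ^ N • c)
    (h2 : ¬ ∃ d ∈ D, ∃ c : M, e₂ = d + l ^ N • c) :
    ∀ (lam : ℤ) (m : ℕ), 1 ≤ m → ∀ d ∈ D,
      ((∃ c : M, lam • e₁ - d = l ^ m • c) ↔ (∃ c : M, lam • e₂ - d = l ^ m • c)) := by
  have : IsAddTorsionFree M := .of_nsmul_eq_zero htf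
  obtain ⟨c₀, hc₀⟩ := hclose
  have hc₀' : e₂ - e₁ = l ^ (N - 1) • -c₀ := by rw [smul_neg, ← hc₀, neg_sub]
  rw [← mem_sup_range_nsmul_iff] at h1 h2
  intro lam m _ d hd
  exact ⟨fun ⟨c, hc⟩ ↦ exists_zsmul_sub_eq_pow_nsmul_of_sub_eq hpure hl h1 hc₀ hd hc,
    fun ⟨c, hc⟩ ↦ exists_zsmul_sub_eq_pow_nsmul_of_sub_eq hpure hl h2 hc₀' hd hc⟩

/-- Let `M` be a torsion-free abelian group, `D` a pure subgroup, `l` a prime, `N ≥ 1`.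
If `e₁ − e₂ ∈ l^{N−1}M` and neither `e₁` nor `e₂` lies in `D + l^N M`, then `e₁` and
`e₂` satisfy the same divisibility conditions `λ·x − d ∈ l^m M` over `D`, i.e. they have
the same `l`-type over `D`. -/
theorem same_l_type_of_close (M : Type*) [AddCommGroup M]
    (htf : ∀ (n : ℕ) (x : M), 0 < n → n • x = 0 → x = 0)
    (D : AddSubgroup M)
    (hpure : ∀ n : ℕ, 1 ≤ n → ∀ d ∈ D, (∃ x : M, d = n • x) → ∃ d' ∈ D, d = n • d')
    (l : ℕ) (hl : Nat.Prime l) (N : ℕ) (hN : 1 ≤ N)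
    (e₁ e₂ : M)
    (hclose : ∃ c : M, e₁ - e₂ = l ^ (N - 1) • c)
    (h1 : ¬ ∃ d ∈ D, ∃ c : M, e₁ = d + l ^ N • c)
    (h2 : ¬ ∃ d ∈ D, ∃ c : M, e₂ = d + l ^ N • c) :
    ∀ (lam : ℤ) (m : ℕ), 1 ≤ m → ∀ d ∈ D,
      ((∃ c : M, lam • e₁ - d = l ^ m • c) ↔ (∃ c : M, lam • e₂ - d = l ^ m • c)) :=
  same_l_type_of_close_general M htf D hpure l hl N e₁ e₂ hclose h1 h2
end
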